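/- arXiv:2112.10932 — 2 statements merged into one kernel-verified Lean document; each statement's English description precedes it below -/
import Mathlib

section
/- There exists a constant C > 0 depending only on #A and p so that for any p-energy E on a finite set A, the standard form Ē(f) = Σ_{x≠y∈A} R(x,y)⁻¹ |f(x)-f(y)|^p (where R is the resistance of E) satisfies C⁻¹ Ē(f) ≤ E(f) ≤ C Ē(f) for all f : A → ℝ. -/
open scoped ENNReal

/-- A (possibly degenerate) `p`-energy on `A`: nonnegative, convex,
`p`-homogeneous, invariant under addition of constants, and Markovian. -/
def IsPEnergyT {A : Type*} (p : ℝ) (E : (A → ℝ) → ℝ) : Prop :=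
  (∀ f : A → ℝ, 0 ≤ E f) ∧
  (∀ f g : A → ℝ, ∀ t : ℝ, 0 < t → t < 1 →
      E (fun x => t * f x + (1 - t) * g x) ≤ t * E f + (1 - t) * E g) ∧
  (∀ (f : A → ℝ) (t : ℝ), E (fun x => t * f x) = |t| ^ p * E f) ∧
  (∀ (f : A → ℝ) (c : ℝ), E (fun x => f x + c) = E f) ∧
  (∀ f : A → ℝ, E (fun x => min (max (f x) 0) 1) ≤ E f)

/-- The `p`-effective resistance, with `R(x,x) = 0` and the convention `1/0 = ∞`. -/
noncomputable def pRes {A : Type*} [DecidableEq A]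
    (E : (A → ℝ) → ℝ) (x y : A) : ℝ≥0∞ :=
  if x = y then 0
  else (ENNReal.ofReal (sInf (E '' {f : A → ℝ | f x = 0 ∧ f y = 1})))⁻¹

/-- The standard form `Ē(f) = Σ_{x≠y} R(x,y)⁻¹ |f(x)-f(y)|^p`, with the
convention `∞⁻¹ = 0`.  (The diagonal terms vanish since `R(x,x)⁻¹` is `∞`,
whose real part is `0`, and `|f x - f x| = 0`.) -/
noncomputable def stdForm {A : Type*} [Fintype A] [DecidableEq A]
    (p : ℝ) (E : (A → ℝ) → ℝ) (f : A → ℝ) : ℝ :=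
  ∑ x : A, ∑ y : A, ((pRes E x y)⁻¹).toReal * |f x - f y| ^ p

/-!
Convexity and `p`-homogeneity make `E ^ (1 / p)` a seminorm. Rescaling `f` to a function that
vanishes at `x` and equals `1` at `y` shows `R(x,y)⁻¹ |f x - f y| ^ p ≤ E f`, hence
`Ē ≤ #(A × A) • E`. Conversely, the Markov property assembles any functions separating `x` from
`y`, for `(x, y) ∈ Tᶜ × T`, into the indicator of `T`; taking infima gives `E (1_T) ≤ C Ē (1_T)`.
A layer-cake decomposition of `f` into multiples of indicators of superlevel sets, along which
the seminorm is subadditive and `∑ w x y |f x - f y|` is additive, extends this to every `f`.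
-/

open Finset

def unitClamp (t : ℝ) : ℝ := min (max t 0) 1

lemma unitClamp_nonneg (t : ℝ) : 0 ≤ unitClamp t := le_min (le_max_right _ _) zero_le_one

lemma unitClamp_le_one (t : ℝ) : unitClamp t ≤ 1 := min_le_right _ _

lemma unitClamp_of_nonpos {t : ℝ} (ht : t ≤ 0) : unitClamp t = 0 := by
  simp [unitClamp, max_eq_right ht]

lemma unitClamp_of_one_le {t : ℝ} (ht : 1 ≤ t) : unitClamp t = 1 := by
  simp [unitClamp, max_eq_left (zero_le_one.trans ht), ht]

lemma sum_le_card_sub_one {ι : Type*} {s : Finset ι} {h : ι → ℝ} (hle : ∀ i ∈ s, h i ≤ 1)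
    {j : ι} (hj : j ∈ s) (hzero : h j = 0) : ∑ i ∈ s, h i ≤ #s - 1 := by
  have : 1 - h j ≤ ∑ i ∈ s, (1 - h i) :=
    single_le_sum (f := fun i => 1 - h i) (fun i hi => sub_nonneg.2 (hle i hi)) hj
  rw [sum_sub_distrib, sum_const, nsmul_one] at this
  linarith

theorem Real.rpow_sum_le_sum_rpow {ι : Type*} (s : Finset ι) {f : ι → ℝ}
    (hf : ∀ i ∈ s, 0 ≤ f i) {q : ℝ} (hq₀ : 0 < q) (hq₁ : q ≤ 1) :
    (∑ i ∈ s, f i) ^ q ≤ ∑ i ∈ s, f i ^ q :=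
  le_sum_of_subadditive_on_pred (· ^ q) (0 ≤ ·) (Real.zero_rpow hq₀.ne').le
    (fun _ _ ha hb => Real.rpow_add_le_add_rpow ha hb hq₀.le hq₁) (fun _ _ => add_nonneg) f hf

theorem le_sum_csInf_image {ι α : Type*} [DecidableEq ι] [Nonempty α] (φ : α → ℝ)
    (K : ι → Set α) {s : Finset ι} (hK : ∀ i ∈ s, (K i).Nonempty) {a : ℝ}
    (h : ∀ g : ι → α, (∀ i ∈ s, g i ∈ K i) → a ≤ ∑ i ∈ s, φ (g i)) :
    a ≤ ∑ i ∈ s, sInf (φ '' K i) := by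
  induction s using Finset.induction_on generalizing a with
  | empty => simpa using h (fun _ => Classical.arbitrary α) (by simp)
  | insert j s hj ih =>
    rw [sum_insert hj, ← sub_le_iff_le_add]
    refine le_csInf ((hK j (mem_insert_self j s)).image φ) ?_
    rintro _ ⟨u, hu, rfl⟩
    rw [sub_le_comm]
    refine ih (fun i hi => hK i (mem_insert_of_mem hi)) fun g hg => ?_
    have hupdate := h (Function.update g j u) fun i hi => by
      rcases eq_or_ne i j with rfl | hij
      · simpa using hu
      · simpa [hij] using hg i ((mem_insert.1 hi).resolve_left hij)
    rw [sum_insert hj, Function.update_self, sum_congr rfl fun i hi => by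
      rw [Function.update_of_ne (ne_of_mem_of_not_mem hi hj)]] at hupdate
    linarith

/-- Layer-cake argument: peeling off the top level set writes `f` as a sum of a function with
fewer values and a multiple of an indicator, both nondecreasing in `f`, so the right-hand side
is additive along the decomposition. -/
theorem Seminorm.le_sum_mul_abs_sub_of_indicator {A : Type*} [Fintype A]
    (N : Seminorm ℝ (A → ℝ)) (w : A → A → ℝ)
    (hN : ∀ T : Finset A, N ((T : Set A).indicator 1) ≤
      ∑ x, ∑ y, w x y * |(T : Set A).indicator 1 x - (T : Set A).indicator 1 y|)
    (f : A → ℝ) : N f ≤ ∑ x, ∑ y, w x y * |f x - f y| := by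
  classical
  have hconst : ∀ c : ℝ, N (fun _ => c) ≤ 0 := fun c => by
    have := hN univ
    simp only [coe_univ, Set.indicator_univ, Pi.one_apply, sub_self, abs_zero, mul_zero,
      sum_const_zero] at this
    calc N (fun _ => c) = N (c • 1) := by congr 1; ext; simp
      _ = |c| * N 1 := by rw [map_smul_eq_mul, Real.norm_eq_abs]
      _ ≤ 0 := mul_nonpos_of_nonneg_of_nonpos (abs_nonneg c) this
  suffices key : ∀ V : Finset ℝ, ∀ f : A → ℝ, (∀ z, f z ∈ V) →
      N f ≤ ∑ x, ∑ y, w x y * |f x - f y| from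
    key _ f fun z => mem_image_of_mem f (mem_univ z)
  intro V
  induction V using Finset.induction_on_max with
  | empty =>
    intro f hf
    obtain rfl : f = fun _ => 0 := funext fun z => absurd (hf z) (notMem_empty _)
    simpa using hconst 0
  | insert a s hlt ih =>
    intro f hf
    rcases s.eq_empty_or_nonempty with rfl | hs
    · obtain rfl : f = fun _ => a := funext fun z => by simpa using hf z
      simpa using hconst a
    set M := s.max' hs
    have hMa : M < a := hlt M (s.max'_mem hs)
    have htop : ∀ z, M < f z ↔ f z = a := fun z => by
      refine ⟨fun h => ?_, fun h => h ▸ hMa⟩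
      rcases mem_insert.1 (hf z) with h' | h'
      · exact h'
      · exact absurd (s.le_max' _ h') h.not_ge
    set T := univ.filter fun z => M < f z
    set χ := (T : Set A).indicator (1 : A → ℝ)
    set g := fun z => min (f z) M
    have hχ : ∀ z, χ z = if M < f z then 1 else 0 := fun z => by
      simp [χ, T, Set.indicator_apply]
    have hg : ∀ z, g z ∈ s := fun z => by
      by_cases h : M < f z
      · simpa [g, min_eq_right h.le] using s.max'_mem hs
      · rw [show g z = f z from min_eq_left (not_lt.1 h)]
        exact (mem_insert.1 (hf z)).resolve_left fun h' => h ((htop z).2 h')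
    have hfg : f = g + (a - M) • χ := funext fun z => by
      by_cases h : M < f z
      · simp [g, hχ, (htop z).1 h, min_eq_right hMa.le, hMa]
      · simp [g, hχ, h, min_eq_left (not_lt.1 h)]
    have hmono : ∀ x y, f x ≤ f y → g x ≤ g y ∧ χ x ≤ χ y := fun x y h => by
      refine ⟨min_le_min_right M h, ?_⟩
      by_cases hx : M < f x
      · simp [hχ, hx, hx.trans_le h]
      · simp only [hχ, hx, if_false]
        split_ifs <;> norm_num
    have habs : ∀ x y, |f x - f y| = |g x - g y| + (a - M) * |χ x - χ y| := fun x y => by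
      have hδ : 0 ≤ a - M := by linarith
      have hsplit : f x - f y = (g x - g y) + (a - M) * (χ x - χ y) := by
        rw [hfg]; simp only [Pi.add_apply, Pi.smul_apply, smul_eq_mul]; ring
      rw [hsplit, ← abs_of_nonneg hδ, ← abs_mul, abs_of_nonneg hδ]
      refine abs_add_eq_add_abs_iff _ _ |>.2 ?_
      rcases le_total (f x) (f y) with h | h
      · obtain ⟨h₁, h₂⟩ := hmono x y h
        exact Or.inr ⟨by linarith, mul_nonpos_of_nonneg_of_nonpos hδ (by linarith)⟩
      · obtain ⟨h₁, h₂⟩ := hmono y x h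
        exact Or.inl ⟨by linarith, mul_nonneg hδ (by linarith)⟩
    calc N f ≤ N g + (a - M) * N χ := by
          rw [hfg]
          refine (map_add_le_add N _ _).trans_eq ?_
          rw [map_smul_eq_mul, Real.norm_of_nonneg (by linarith)]
      _ ≤ ∑ x, ∑ y, w x y * |g x - g y| + (a - M) * ∑ x, ∑ y, w x y * |χ x - χ y| := by
          exact add_le_add (ih g hg) (mul_le_mul_of_nonneg_left (hN T) (by linarith))
      _ = ∑ x, ∑ y, w x y * |f x - f y| := by
          simp only [habs, mul_add, sum_add_distrib, mul_sum, mul_left_comm]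

noncomputable def pCap {A : Type*} (E : (A → ℝ) → ℝ) (x y : A) : ℝ :=
  sInf (E '' {f : A → ℝ | f x = 0 ∧ f y = 1})

namespace IsPEnergyT

variable {A : Type*} {p : ℝ} {E : (A → ℝ) → ℝ}

theorem nonneg (hE : IsPEnergyT p E) (f : A → ℝ) : 0 ≤ E f := hE.1 f

theorem smul (hE : IsPEnergyT p E) (t : ℝ) (f : A → ℝ) : E (t • f) = |t| ^ p * E f :=
  hE.2.2.1 f t

theorem add_const (hE : IsPEnergyT p E) (f : A → ℝ) (c : ℝ) : E (fun x => f x + c) = E f :=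
  hE.2.2.2.1 f c

theorem comp_unitClamp_le (hE : IsPEnergyT p E) (f : A → ℝ) : E (unitClamp ∘ f) ≤ E f :=
  hE.2.2.2.2 f

/-- Writing `f + g = t • (t⁻¹ • f) + (1 - t) • ((1 - t)⁻¹ • g)` with `t = α / (α + β)`, both
rescaled summands have energy at most `(α + β) ^ p`. -/
theorem add_le_of_le_rpow (hE : IsPEnergyT p E) {f g : A → ℝ} {α β : ℝ}
    (hα : 0 < α) (hβ : 0 < β) (hf : E f ≤ α ^ p) (hg : E g ≤ β ^ p) :
    E (f + g) ≤ (α + β) ^ p := by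
  set t := α / (α + β)
  have ht : 0 < t := by positivity
  have ht1 : 0 < 1 - t := by
    rw [sub_pos, div_lt_one (by positivity)]; linarith
  have h1t : 1 - t = β / (α + β) := by simp only [t]; field_simp; ring
  have hrescale : ∀ {γ : ℝ} {h : A → ℝ}, 0 < γ → E h ≤ γ ^ p →
      E ((γ / (α + β))⁻¹ • h) ≤ (α + β) ^ p := by
    intro γ h hγ hh
    rw [hE.smul, inv_div, abs_of_pos (by positivity), Real.div_rpow (by positivity) hγ.le]
    calc (α + β) ^ p / γ ^ p * E h ≤ (α + β) ^ p / γ ^ p * γ ^ p := by gcongr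
      _ = (α + β) ^ p := div_mul_cancel₀ _ (Real.rpow_pos_of_pos hγ p).ne'
  have hconv := hE.2.1 (t⁻¹ • f) ((1 - t)⁻¹ • g) t ht (by linarith)
  have hsplit : (fun x => t * (t⁻¹ • f) x + (1 - t) * ((1 - t)⁻¹ • g) x) = f + g := by
    funext x; simp [ht.ne', ht1.ne']
  rw [hsplit] at hconv
  calc E (f + g) ≤ t * E (t⁻¹ • f) + (1 - t) * E ((1 - t)⁻¹ • g) := hconv
    _ ≤ t * (α + β) ^ p + (1 - t) * (α + β) ^ p := by
      gcongr
      · exact hrescale hα hf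
      · rw [h1t]; exact hrescale hβ hg
    _ = (α + β) ^ p := by ring

theorem rpow_inv_add_le (hE : IsPEnergyT p E) (hp : 0 < p) (f g : A → ℝ) :
    E (f + g) ^ p⁻¹ ≤ E f ^ p⁻¹ + E g ^ p⁻¹ := by
  refine le_of_forall_pos_le_add fun ε hε => ?_
  have hf0 := Real.rpow_nonneg (hE.nonneg f) p⁻¹
  have hg0 := Real.rpow_nonneg (hE.nonneg g) p⁻¹
  have hroot : ∀ h : A → ℝ, E h ≤ (E h ^ p⁻¹ + ε / 2) ^ p := fun h => by
    conv_lhs => rw [← Real.rpow_inv_rpow (hE.nonneg h) hp.ne']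
    gcongr
    · exact Real.rpow_nonneg (hE.nonneg h) p⁻¹
    · linarith
  have := hE.add_le_of_le_rpow (by positivity) (by positivity) (hroot f) (hroot g)
  calc E (f + g) ^ p⁻¹ ≤ ((E f ^ p⁻¹ + ε / 2 + (E g ^ p⁻¹ + ε / 2)) ^ p) ^ p⁻¹ := by
        gcongr
        exact hE.nonneg _
    _ = E f ^ p⁻¹ + E g ^ p⁻¹ + ε := by
      rw [Real.rpow_rpow_inv (by positivity) hp.ne']; ring

noncomputable def rootSeminorm (hE : IsPEnergyT p E) (hp : 0 < p) : Seminorm ℝ (A → ℝ) :=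
  Seminorm.of (fun f => E f ^ p⁻¹) (hE.rpow_inv_add_le hp) fun t f => by
    rw [hE.smul, Real.mul_rpow (by positivity) (hE.nonneg f),
      Real.rpow_rpow_inv (abs_nonneg t) hp.ne', Real.norm_eq_abs]

section RootSeminorm

variable (hE : IsPEnergyT p E) (hp : 0 < p)

theorem rootSeminorm_apply (f : A → ℝ) : hE.rootSeminorm hp f = E f ^ p⁻¹ := rfl

theorem rootSeminorm_rpow (f : A → ℝ) : hE.rootSeminorm hp f ^ p = E f :=
  Real.rpow_inv_rpow (hE.nonneg f) hp.ne'

theorem rootSeminorm_add_const (f : A → ℝ) (c : ℝ) :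
    hE.rootSeminorm hp (fun x => f x + c) = hE.rootSeminorm hp f := by
  simp only [rootSeminorm_apply, hE.add_const]

theorem rootSeminorm_comp_unitClamp_le (f : A → ℝ) :
    hE.rootSeminorm hp (unitClamp ∘ f) ≤ hE.rootSeminorm hp f := by
  simp only [rootSeminorm_apply]
  gcongr
  · exact hE.nonneg _
  · exact hE.comp_unitClamp_le f

variable [Fintype A] [DecidableEq A]

/-- Clamping `∑ x ∈ Tᶜ, g x y - (#Tᶜ - 1)` to `[0, 1]` gives a function `v y` that equals `1` at
`y` and vanishes on `Tᶜ`; clamping `∑ y ∈ T, v y` gives the indicator of `T`. -/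
theorem rootSeminorm_indicator_le (T : Finset A) (g : A → A → A → ℝ)
    (hg₀ : ∀ x ∈ Tᶜ, ∀ y ∈ T, g x y x = 0) (hg₁ : ∀ x ∈ Tᶜ, ∀ y ∈ T, g x y y = 1) :
    hE.rootSeminorm hp ((T : Set A).indicator 1) ≤
      ∑ x ∈ Tᶜ, ∑ y ∈ T, hE.rootSeminorm hp (g x y) := by
  set N := hE.rootSeminorm hp
  set S := Tᶜ
  let v : A → A → ℝ := fun y z => unitClamp (∑ x ∈ S, unitClamp (g x y z) - (#S - 1))
  have hv : ∀ y, N (v y) ≤ ∑ x ∈ S, N (g x y) := fun y => calc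
    N (v y) ≤ N (fun z => ∑ x ∈ S, unitClamp (g x y z) + -(#S - 1 : ℝ)) :=
      hE.rootSeminorm_comp_unitClamp_le hp _
    _ = N (∑ x ∈ S, unitClamp ∘ g x y) := by
      rw [hE.rootSeminorm_add_const hp]; congr 1; ext z; simp
    _ ≤ ∑ x ∈ S, N (unitClamp ∘ g x y) :=
      le_sum_of_subadditive N (map_zero N).le (map_add_le_add N) _ _
    _ ≤ ∑ x ∈ S, N (g x y) := sum_le_sum fun x _ => hE.rootSeminorm_comp_unitClamp_le hp _
  have hv_on : ∀ y ∈ T, v y y = 1 := fun y hy => by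
    have : ∑ x ∈ S, unitClamp (g x y y) = #S := by
      rw [sum_congr rfl fun x hx => by rw [hg₁ x hx y hy, unitClamp_of_one_le le_rfl]]
      simp
    simp only [v, this, sub_sub_cancel, unitClamp_of_one_le le_rfl]
  have hv_off : ∀ y ∈ T, ∀ z ∈ S, v y z = 0 := fun y hy z hz => by
    refine unitClamp_of_nonpos (sub_nonpos.2
      (sum_le_card_sub_one (fun x _ => unitClamp_le_one _) hz ?_))
    rw [hg₀ z hz y hy, unitClamp_of_nonpos le_rfl]
  have hind : (T : Set A).indicator 1 = unitClamp ∘ ∑ y ∈ T, v y := by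
    ext z
    by_cases hz : z ∈ T
    · rw [Set.indicator_of_mem (by simpa using hz), Function.comp_apply, Finset.sum_apply,
        Pi.one_apply, unitClamp_of_one_le]
      exact (hv_on z hz).symm.le.trans
        (single_le_sum (f := fun y => v y z) (fun y _ => unitClamp_nonneg _) hz)
    · rw [Set.indicator_of_notMem (by simpa using hz), Function.comp_apply, Finset.sum_apply,
        sum_eq_zero fun y hy => hv_off y hy z (mem_compl.2 hz), unitClamp_of_nonpos le_rfl]
  calc N ((T : Set A).indicator 1) ≤ N (∑ y ∈ T, v y) :=
        hind ▸ hE.rootSeminorm_comp_unitClamp_le hp _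
    _ ≤ ∑ y ∈ T, N (v y) := le_sum_of_subadditive N (map_zero N).le (map_add_le_add N) _ _
    _ ≤ ∑ y ∈ T, ∑ x ∈ S, N (g x y) := sum_le_sum fun y _ => hv y
    _ = ∑ x ∈ S, ∑ y ∈ T, N (g x y) := sum_comm

end RootSeminorm

theorem pCap_nonneg (hE : IsPEnergyT p E) (x y : A) : 0 ≤ pCap E x y :=
  Real.sInf_nonneg (by rintro _ ⟨f, -, rfl⟩; exact hE.nonneg f)

theorem toReal_inv_pRes [DecidableEq A] (hE : IsPEnergyT p E) (x y : A) :
    ((pRes E x y)⁻¹).toReal = if x = y then 0 else pCap E x y := by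
  unfold pRes
  split_ifs
  · simp
  · rw [inv_inv]
    exact ENNReal.toReal_ofReal (hE.pCap_nonneg x y)

theorem pCap_mul_le (hE : IsPEnergyT p E) (hp : 0 < p) (f : A → ℝ) (x y : A) :
    pCap E x y * |f x - f y| ^ p ≤ E f := by
  by_cases hxy : f x = f y
  · simp [hxy, Real.zero_rpow hp.ne', hE.nonneg f]
  set d := f y - f x
  have hd : 0 < |d| := abs_pos.2 (sub_ne_zero.2 (Ne.symm hxy))
  have hcap : pCap E x y ≤ E (d⁻¹ • fun z => f z + -f x) :=
    csInf_le ⟨0, by rintro _ ⟨f, -, rfl⟩; exact hE.nonneg f⟩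
      ⟨_, ⟨by simp, by simp [d, ← sub_eq_add_neg, sub_ne_zero.2 (Ne.symm hxy)]⟩, rfl⟩
  rw [hE.smul, hE.add_const, abs_inv, Real.inv_rpow hd.le] at hcap
  rw [abs_sub_comm]
  calc pCap E x y * |d| ^ p ≤ (|d| ^ p)⁻¹ * E f * |d| ^ p := by gcongr
    _ = E f := by field_simp [(Real.rpow_pos_of_pos hd p).ne']

variable [Fintype A] [DecidableEq A]

theorem stdForm_le (hE : IsPEnergyT p E) (hp : 0 < p) (f : A → ℝ) :
    stdForm p E f ≤ Fintype.card (A × A) * E f := calc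
  stdForm p E f ≤ ∑ _x : A, ∑ _y : A, E f := sum_le_sum fun x _ => sum_le_sum fun y _ => by
      rw [hE.toReal_inv_pRes]
      split_ifs
      · simpa using hE.nonneg f
      · exact hE.pCap_mul_le hp f x y
  _ = Fintype.card (A × A) * E f := by simp [Fintype.card_prod, mul_assoc]

theorem energy_indicator_le_sum (hE : IsPEnergyT p E) (hp : 1 ≤ p) (T : Finset A)
    (g : A × A → A → ℝ) (hg : ∀ q ∈ Tᶜ ×ˢ T, g q ∈ {f | f q.1 = 0 ∧ f q.2 = 1}) :
    E ((T : Set A).indicator 1) ≤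
      (Fintype.card (A × A) : ℝ) ^ (p - 1) * ∑ q ∈ Tᶜ ×ˢ T, E (g q) := by
  set N := hE.rootSeminorm (by linarith)
  have hN := hE.rootSeminorm_indicator_le (by linarith) T (fun x y => g (x, y))
    (fun x hx y hy => (hg (x, y) (mem_product.2 ⟨hx, hy⟩)).1)
    (fun x hx y hy => (hg (x, y) (mem_product.2 ⟨hx, hy⟩)).2)
  rw [← sum_product' (f := fun x y => N (g (x, y)))] at hN
  calc E ((T : Set A).indicator 1) = N ((T : Set A).indicator 1) ^ p :=
        (hE.rootSeminorm_rpow _ _).symm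
    _ ≤ (∑ q ∈ Tᶜ ×ˢ T, N (g q)) ^ p := by gcongr
    _ ≤ #(Tᶜ ×ˢ T) ^ (p - 1) * ∑ q ∈ Tᶜ ×ˢ T, N (g q) ^ p :=
      Real.rpow_sum_le_const_mul_sum_rpow_of_nonneg _ hp fun q _ => apply_nonneg N _
    _ ≤ (Fintype.card (A × A) : ℝ) ^ (p - 1) * ∑ q ∈ Tᶜ ×ˢ T, E (g q) := by
      simp only [N, hE.rootSeminorm_rpow]
      refine mul_le_mul_of_nonneg_right ?_ (sum_nonneg fun q _ => hE.nonneg _)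
      exact Real.rpow_le_rpow (by positivity) (by exact_mod_cast card_le_univ _) (by linarith)

theorem sum_pCap_le_stdForm_indicator (hE : IsPEnergyT p E) (T : Finset A) :
    ∑ q ∈ Tᶜ ×ˢ T, pCap E q.1 q.2 ≤ stdForm p E ((T : Set A).indicator 1) := by
  set χ := (T : Set A).indicator (1 : A → ℝ)
  calc ∑ q ∈ Tᶜ ×ˢ T, pCap E q.1 q.2
      = ∑ q ∈ Tᶜ ×ˢ T, ((pRes E q.1 q.2)⁻¹).toReal * |χ q.1 - χ q.2| ^ p := by
        refine sum_congr rfl fun q hq => ?_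
        obtain ⟨hx, hy⟩ := mem_product.1 hq
        rw [mem_compl] at hx
        have hxy : q.1 ≠ q.2 := fun h => hx (h ▸ hy)
        simp [χ, hE.toReal_inv_pRes, hxy, hx, hy]
    _ ≤ ∑ q : A × A, ((pRes E q.1 q.2)⁻¹).toReal * |χ q.1 - χ q.2| ^ p :=
        sum_le_sum_of_subset_of_nonneg (subset_univ _) fun _ _ _ => by positivity
    _ = stdForm p E χ :=
        Fintype.sum_prod_type' fun x y => ((pRes E x y)⁻¹).toReal * |χ x - χ y| ^ p

theorem energy_indicator_le [Nonempty A] (hE : IsPEnergyT p E) (hp : 1 ≤ p) (T : Finset A) :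
    E ((T : Set A).indicator 1) ≤
      (Fintype.card (A × A) : ℝ) ^ (p - 1) * stdForm p E ((T : Set A).indicator 1) := by
  set c := (Fintype.card (A × A) : ℝ) ^ (p - 1)
  have hc : 0 < c := Real.rpow_pos_of_pos (Nat.cast_pos.2 Fintype.card_pos) _
  have hcap := le_sum_csInf_image E (fun q : A × A => {f : A → ℝ | f q.1 = 0 ∧ f q.2 = 1})
    (s := Tᶜ ×ˢ T) (a := E ((T : Set A).indicator 1) / c)
    (fun q hq => ⟨fun z => if z = q.2 then 1 else 0, by
      obtain ⟨hx, hy⟩ := mem_product.1 hq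
      simp [(ne_of_mem_of_not_mem hy (mem_compl.1 hx)).symm]⟩)
    fun g hg => (div_le_iff₀' hc).2 (hE.energy_indicator_le_sum hp T g hg)
  rw [div_le_iff₀' hc] at hcap
  exact hcap.trans (mul_le_mul_of_nonneg_left (hE.sum_pCap_le_stdForm_indicator T) hc.le)

theorem energy_le_stdForm [Nonempty A] (hE : IsPEnergyT p E) (hp : 1 ≤ p) (f : A → ℝ) :
    E f ≤ ((Fintype.card (A × A) : ℝ) ^ (p - 1)) ^ 2 * stdForm p E f := by
  have hp₀ : 0 < p := by linarith
  set K := (Fintype.card (A × A) : ℝ) ^ (p - 1)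
  set a : A → A → ℝ := fun x y => ((pRes E x y)⁻¹).toReal
  set w : A → A → ℝ := fun x y => (K * a x y) ^ p⁻¹
  have hw : ∀ x y (d : ℝ), (w x y * |d|) ^ p = K * (a x y * |d| ^ p) := fun x y d => by
    rw [Real.mul_rpow (by positivity) (abs_nonneg d), Real.rpow_inv_rpow (by positivity) hp₀.ne',
      mul_assoc]
  have hstd : ∀ g : A → ℝ, K * stdForm p E g = ∑ q : A × A, (w q.1 q.2 * |g q.1 - g q.2|) ^ p :=
    fun g => by
      simp only [hw, stdForm, mul_sum]
      exact (Fintype.sum_prod_type' fun x y => K * (a x y * |g x - g y| ^ p)).symm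
  have hroot : ∀ g : A → ℝ, (K * stdForm p E g) ^ p⁻¹ ≤ ∑ x, ∑ y, w x y * |g x - g y| := by
    intro g
    rw [hstd, ← Fintype.sum_prod_type']
    refine (Real.rpow_sum_le_sum_rpow _ (fun _ _ => by positivity) (inv_pos.2 hp₀)
      (inv_le_one_of_one_le₀ hp)).trans_eq (sum_congr rfl fun q _ => ?_)
    exact Real.rpow_rpow_inv (by positivity) hp₀.ne'
  have hcoarea := (hE.rootSeminorm hp₀).le_sum_mul_abs_sub_of_indicator w (fun T =>
    (Real.rpow_le_rpow (hE.nonneg _) (hE.energy_indicator_le hp T) (by positivity)).trans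
      (hroot _)) f
  calc E f = hE.rootSeminorm hp₀ f ^ p := (hE.rootSeminorm_rpow hp₀ f).symm
    _ ≤ (∑ q : A × A, w q.1 q.2 * |f q.1 - f q.2|) ^ p := by
      rw [Fintype.sum_prod_type' fun x y => w x y * |f x - f y|]
      gcongr
    _ ≤ K * ∑ q : A × A, (w q.1 q.2 * |f q.1 - f q.2|) ^ p :=
      Real.rpow_sum_le_const_mul_sum_rpow_of_nonneg _ hp fun _ _ => by positivity
    _ = K ^ 2 * stdForm p E f := by rw [← hstd, sq, mul_assoc]

end IsPEnergyT

theorem stdForm_nonneg {A : Type*} [Fintype A] [DecidableEq A] (p : ℝ) (E : (A → ℝ) → ℝ)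
    (f : A → ℝ) : 0 ≤ stdForm p E f :=
  sum_nonneg fun _ _ => sum_nonneg fun _ _ => by positivity

/-- There is `C > 0` depending only on `#A` and `p` so that for any `p`-energy
`E` the standard form `Ē` with coefficients `R(x,y)⁻¹` satisfies
`C⁻¹ Ē(f) ≤ E(f) ≤ C Ē(f)` for all `f`. -/
theorem pEnergy_comparable_stdForm {A : Type*} [Fintype A] [DecidableEq A]
    (hA : 2 ≤ Fintype.card A) (p : ℝ) (hp : 1 < p) :
    ∃ C : ℝ, 0 < C ∧
      ∀ E : (A → ℝ) → ℝ, IsPEnergyT p E → ∀ f : A → ℝ,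
        C⁻¹ * stdForm p E f ≤ E f ∧ E f ≤ C * stdForm p E f := by
  have : Nonempty A := Fintype.card_pos_iff.1 (by omega)
  set m : ℝ := (Fintype.card (A × A) : ℝ)
  have hm : 1 ≤ m := Nat.one_le_cast.2 Fintype.card_pos
  refine ⟨m ^ (2 * p), by positivity, fun E hE f => ⟨?_, ?_⟩⟩
  · rw [inv_mul_le_iff₀ (by positivity)]
    refine (hE.stdForm_le (by linarith) f).trans (mul_le_mul_of_nonneg_right ?_ (hE.nonneg f))
    exact Real.self_le_rpow_of_one_le hm (by linarith)
  · refine (hE.energy_le_stdForm hp.le f).trans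
      (mul_le_mul_of_nonneg_right ?_ (stdForm_nonneg p E f))
    rw [← Real.rpow_natCast, ← Real.rpow_mul (by positivity)]
    exact Real.rpow_le_rpow_of_exponent_le hm (by push_cast; linarith)
end

section
/- Let A be a finite set, E a nondegenerate p-energy on A with resistance R, and suppose 0 < δ < (#A)^{-#A(#A-1)p/2} and δ(E) := min_{x≠y}R(x,y) / max_{x≠y}R(x,y) < δ. Then there exists a non-trivial equivalence relation J on A with δ_J(E) < δ^{2/(#A(#A-1))} · (#A)^p. -/
/-
The conductance `C(x,y) = R(x,y)⁻¹` obeys a weak triangle inequality: a function going from `0`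
at `x` to `1` at `z` must change by at least `1/2` between `x` and `y` or between `y` and `z`,
and homogeneity then gives `R(x,z) ≤ 2^p max(R(x,y), R(y,z))`. The at most `N = #A(#A-1)/2`
values of `R` span a ratio `δ(E)⁻¹ > δ⁻¹ = K^N` with `K = δ^{-1/N} > (#A)^p ≥ 2^p`, so consecutive
values cannot all lie within a factor `K`: there is a value `t` with no value in `(t, Kt]`. By the
triangle inequality, "`R ≤ t`" is then an equivalence relation, and `δ_J(E) ≤ t / (Kt) = δ^{1/N}`.
-/

/-- A (nondegenerate) `p`-energy on `A`. -/
def IsPEnergy {A : Type*} (p : ℝ) (E : (A → ℝ) → ℝ) : Prop :=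
  (∀ f : A → ℝ, 0 ≤ E f) ∧
  (∀ f g : A → ℝ, ∀ t : ℝ, 0 < t → t < 1 →
      E (fun x => t * f x + (1 - t) * g x) ≤ t * E f + (1 - t) * E g) ∧
  (∀ (f : A → ℝ) (t : ℝ), E (fun x => t * f x) = |t| ^ p * E f) ∧
  (∀ (f : A → ℝ) (c : ℝ), E (fun x => f x + c) = E f) ∧
  (∀ f : A → ℝ, E (fun x => min (max (f x) 0) 1) ≤ E f) ∧
  (∀ f : A → ℝ, E f = 0 ↔ ∃ c : ℝ, ∀ x, f x = c)

/-- The real-valued `p`-resistance `R(x,y) = (inf{E f : f x = 0, f y = 1})⁻¹`. -/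
noncomputable def rRes {A : Type*} (E : (A → ℝ) → ℝ) (x y : A) : ℝ :=
  (sInf (E '' {f : A → ℝ | f x = 0 ∧ f y = 1}))⁻¹

/-- A non-trivial equivalence relation on `A`. -/
def IsNontrivialEquiv {A : Type*} (J : A → A → Prop) : Prop :=
  Equivalence J ∧ (∃ x y : A, x ≠ y ∧ J x y) ∧ (∃ x y : A, ¬ J x y)

/-- `δ_J(E) = (max_{x J y, x ≠ y} R(x,y)) / (min_{¬ x J y} R(x,y))`. -/
noncomputable def deltaJ {A : Type*} (E : (A → ℝ) → ℝ) (J : A → A → Prop) : ℝ :=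
  sSup {d : ℝ | ∃ x y : A, x ≠ y ∧ J x y ∧ d = rRes E x y} /
    sInf {d : ℝ | ∃ x y : A, ¬ J x y ∧ d = rRes E x y}

/-- `δ(E) = (min_{x ≠ y} R(x,y)) / (max_{x ≠ y} R(x,y))`. -/
noncomputable def deltaE {A : Type*} (E : (A → ℝ) → ℝ) : ℝ :=
  sInf {d : ℝ | ∃ x y : A, x ≠ y ∧ d = rRes E x y} /
    sSup {d : ℝ | ∃ x y : A, x ≠ y ∧ d = rRes E x y}

open Finset

section

variable {A : Type*} {p : ℝ} {E : (A → ℝ) → ℝ}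

namespace IsPEnergy

lemma nonneg (hE : IsPEnergy p E) (f : A → ℝ) : 0 ≤ E f := hE.1 f

lemma apply_smul (hE : IsPEnergy p E) (f : A → ℝ) (t : ℝ) :
    E (fun x => t * f x) = |t| ^ p * E f := hE.2.2.1 f t

lemma apply_add_const (hE : IsPEnergy p E) (f : A → ℝ) (c : ℝ) :
    E (fun x => f x + c) = E f := hE.2.2.2.1 f c

lemma apply_truncate_le (hE : IsPEnergy p E) (f : A → ℝ) :
    E (fun x => min (max (f x) 0) 1) ≤ E f := hE.2.2.2.2.1 f

lemma eq_zero_iff (hE : IsPEnergy p E) (f : A → ℝ) : E f = 0 ↔ ∃ c : ℝ, ∀ x, f x = c :=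
  hE.2.2.2.2.2 f

lemma convexOn (hE : IsPEnergy p E) : ConvexOn ℝ Set.univ E := by
  refine ⟨convex_univ, fun f _ g _ a b ha hb hab => ?_⟩
  obtain rfl | ha := ha.eq_or_lt
  · obtain rfl : b = 1 := by linarith
    simp only [zero_smul, one_smul, zero_add, le_refl]
  obtain rfl | hb := hb.eq_or_lt
  · obtain rfl : a = 1 := by linarith
    simp only [zero_smul, one_smul, add_zero, le_refl]
  obtain rfl : b = 1 - a := by linarith
  exact hE.2.1 f g a ha (by linarith)

lemma continuous [Fintype A] (hE : IsPEnergy p E) : Continuous E :=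
  continuousOn_univ.mp (hE.convexOn.continuousOn isOpen_univ)

end IsPEnergy

noncomputable def conductance (E : (A → ℝ) → ℝ) (x y : A) : ℝ :=
  sInf (E '' {f : A → ℝ | f x = 0 ∧ f y = 1})

lemma rRes_eq_inv_conductance (x y : A) : rRes E x y = (conductance E x y)⁻¹ := rfl

lemma nonempty_setOf_apply_eq_zero_and_apply_eq_one {x y : A} (h : x ≠ y) :
    {f : A → ℝ | f x = 0 ∧ f y = 1}.Nonempty := by
  classical
  exact ⟨fun z => if z = y then 1 else 0, by simp [h], by simp⟩

namespace IsPEnergy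

lemma bddBelow_image (hE : IsPEnergy p E) (s : Set (A → ℝ)) : BddBelow (E '' s) :=
  ⟨0, by rintro _ ⟨f, _, rfl⟩; exact hE.nonneg f⟩

lemma conductance_nonneg (hE : IsPEnergy p E) (x y : A) : 0 ≤ conductance E x y :=
  Real.sInf_nonneg (by rintro _ ⟨f, _, rfl⟩; exact hE.nonneg f)

lemma conductance_le (hE : IsPEnergy p E) {x y : A} {f : A → ℝ} (hx : f x = 0) (hy : f y = 1) :
    conductance E x y ≤ E f :=
  csInf_le (hE.bddBelow_image _) ⟨f, ⟨hx, hy⟩, rfl⟩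

lemma conductance_comm (hE : IsPEnergy p E) (x y : A) : conductance E x y = conductance E y x := by
  have key : ∀ u v : A, E '' {f : A → ℝ | f u = 0 ∧ f v = 1} ⊆
      E '' {f : A → ℝ | f v = 0 ∧ f u = 1} := by
    rintro u v _ ⟨f, ⟨hfu, hfv⟩, rfl⟩
    refine ⟨fun z => -1 * f z + 1, ⟨by simp [hfv], by simp [hfu]⟩, ?_⟩
    rw [hE.apply_add_const (fun z => -1 * f z), hE.apply_smul]
    simp
  rw [conductance, (key x y).antisymm (key y x), conductance]

lemma rRes_comm (hE : IsPEnergy p E) (x y : A) : rRes E x y = rRes E y x := by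
  rw [rRes_eq_inv_conductance, rRes_eq_inv_conductance, hE.conductance_comm]

lemma rpow_abs_sub_mul_conductance_le (hE : IsPEnergy p E) (hp : 0 < p) (x y : A)
    (f : A → ℝ) : |f x - f y| ^ p * conductance E x y ≤ E f := by
  obtain hxy | hxy := eq_or_ne (f x) (f y)
  · rw [hxy, sub_self, abs_zero, Real.zero_rpow hp.ne', zero_mul]
    exact hE.nonneg f
  have hs : f y - f x ≠ 0 := sub_ne_zero.mpr hxy.symm
  have hspos : 0 < |f y - f x| ^ p := Real.rpow_pos_of_pos (abs_pos.mpr hs) p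
  let g : A → ℝ := fun z => (f y - f x)⁻¹ * (f z + -f x)
  have hEg : E g = (|f y - f x| ^ p)⁻¹ * E f := by
    rw [hE.apply_smul, hE.apply_add_const, abs_inv, Real.inv_rpow (abs_nonneg _)]
  have hg : conductance E x y ≤ E g :=
    hE.conductance_le (by simp [g]) (by simp only [g, ← sub_eq_add_neg]; exact inv_mul_cancel₀ hs)
  rw [abs_sub_comm]
  calc |f y - f x| ^ p * conductance E x y ≤ |f y - f x| ^ p * E g := by gcongr
    _ = E f := by rw [hEg, mul_inv_cancel_left₀ hspos.ne']

lemma conductance_pos [Fintype A] (hE : IsPEnergy p E) {x y : A} (hxy : x ≠ y) :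
    0 < conductance E x y := by
  let K : Set (A → ℝ) := Set.Icc 0 1 ∩ {f | f x = 0 ∧ f y = 1}
  have hK : IsCompact K :=
    isCompact_Icc.inter_right <| (isClosed_singleton.preimage (continuous_apply x)).inter
      (isClosed_singleton.preimage (continuous_apply y))
  have hclamp : ∀ f : A → ℝ, f x = 0 → f y = 1 → (fun z => min (max (f z) 0) 1) ∈ K :=
    fun f hfx hfy => ⟨⟨fun z => by simp, fun z => by simp⟩, by simp [hfx], by simp [hfy]⟩
  obtain ⟨f₁, hf₁x, hf₁y⟩ := nonempty_setOf_apply_eq_zero_and_apply_eq_one hxy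
  obtain ⟨f₀, ⟨-, hf₀x, hf₀y⟩, hmin⟩ :=
    hK.exists_isMinOn ⟨_, hclamp f₁ hf₁x hf₁y⟩ hE.continuous.continuousOn
  have hf₀ : 0 < E f₀ := by
    refine (hE.nonneg f₀).lt_of_ne fun h => ?_
    obtain ⟨c, hc⟩ := (hE.eq_zero_iff f₀).mp h.symm
    have : (0 : ℝ) = 1 := by rw [← hf₀x, ← hf₀y, hc x, hc y]
    exact zero_ne_one this
  -- truncating to `[0, 1]` lowers the energy, so `f₀` is a global minimiser
  refine hf₀.trans_le (le_csInf ⟨_, f₁, ⟨hf₁x, hf₁y⟩, rfl⟩ ?_)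
  rintro _ ⟨f, ⟨hfx, hfy⟩, rfl⟩
  exact (hmin (hclamp f hfx hfy)).trans (hE.apply_truncate_le f)

lemma rRes_pos [Fintype A] (hE : IsPEnergy p E) {x y : A} (hxy : x ≠ y) : 0 < rRes E x y :=
  inv_pos.mpr (hE.conductance_pos hxy)

lemma two_inv_rpow_mul_le_conductance (hE : IsPEnergy p E) (hp : 0 < p) {x z : A} (y : A)
    (hxz : x ≠ z) {c : ℝ} (hxy : c ≤ conductance E x y) (hyz : c ≤ conductance E y z) :
    2⁻¹ ^ p * c ≤ conductance E x z := by
  refine le_csInf ((nonempty_setOf_apply_eq_zero_and_apply_eq_one hxz).image E) ?_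
  rintro _ ⟨f, ⟨hfx, hfz⟩, rfl⟩
  have bound : ∀ u v : A, 2⁻¹ ≤ |f u - f v| → c ≤ conductance E u v → 2⁻¹ ^ p * c ≤ E f :=
    fun u v huv hc => calc
      2⁻¹ ^ p * c ≤ 2⁻¹ ^ p * conductance E u v := by gcongr
      _ ≤ |f u - f v| ^ p * conductance E u v := by
        gcongr
        exact hE.conductance_nonneg u v
      _ ≤ E f := hE.rpow_abs_sub_mul_conductance_le hp u v f
  have : (1 : ℝ) ≤ |f x - f y| + |f y - f z| := by
    simpa [hfx, hfz] using abs_sub_le (f x) (f y) (f z)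
  obtain h | h : 2⁻¹ ≤ |f x - f y| ∨ 2⁻¹ ≤ |f y - f z| := by
    by_contra! h
    linarith
  · exact bound x y h hxy
  · exact bound y z h hyz

lemma rRes_le_two_rpow_mul [Fintype A] (hE : IsPEnergy p E) (hp : 0 < p) {x y z : A}
    (hxy : x ≠ y) (hyz : y ≠ z) (hxz : x ≠ z) {t : ℝ} (hxyt : rRes E x y ≤ t)
    (hyzt : rRes E y z ≤ t) : rRes E x z ≤ 2 ^ p * t := by
  have ht : 0 < t := (hE.rRes_pos hxy).trans_le hxyt
  have key := hE.two_inv_rpow_mul_le_conductance hp y hxz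
    (inv_le_of_inv_le₀ (hE.conductance_pos hxy) hxyt)
    (inv_le_of_inv_le₀ (hE.conductance_pos hyz) hyzt)
  calc rRes E x z ≤ (2⁻¹ ^ p * t⁻¹)⁻¹ := inv_anti₀ (by positivity) key
    _ = 2 ^ p * t := by rw [Real.inv_rpow zero_le_two, mul_inv, inv_inv, inv_inv]

end IsPEnergy

lemma le_pow_mul_of_forall_exists_lt_le_mul {V : Finset ℝ} {K b : ℝ} (hK : 1 ≤ K) (hb : b ∈ V)
    (H : ∀ t ∈ V, t < b → ∃ v ∈ V, t < v ∧ v ≤ K * t) (n : ℕ) :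
    ∀ a ∈ V, 0 ≤ a → #{v ∈ V | a < v} ≤ n → b ≤ K ^ n * a := by
  induction n with
  | zero =>
    intro a _ _ hcard
    rw [Nat.le_zero, card_eq_zero, filter_eq_empty_iff] at hcard
    simpa using hcard hb
  | succ n ih =>
    intro a ha ha0 hcard
    obtain hba | hab := le_or_gt b a
    · exact hba.trans (le_mul_of_one_le_left ha0 (one_le_pow₀ hK))
    obtain ⟨v, hv, hav, hvK⟩ := H a ha hab
    have hsub : {w ∈ V | v < w} ⊆ {w ∈ V | a < w}.erase v := fun w hw => by
      simp only [mem_filter, mem_erase] at hw ⊢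
      exact ⟨hw.2.ne', hw.1, hav.trans hw.2⟩
    have hvmem : v ∈ {w ∈ V | a < w} := mem_filter.mpr ⟨hv, hav⟩
    have hcard' : #{w ∈ V | v < w} ≤ n := by
      have := card_lt_card (hsub.trans_ssubset (erase_ssubset hvmem))
      omega
    calc b ≤ K ^ n * v := ih v hv (ha0.trans hav.le) hcard'
      _ ≤ K ^ n * (K * a) := by gcongr
      _ = K ^ (n + 1) * a := by ring

lemma exists_gap_of_pow_card_mul_lt {V : Finset ℝ} {K a b : ℝ} (hK : 1 ≤ K) (ha : a ∈ V)
    (hb : b ∈ V) (ha0 : 0 ≤ a) (hab : K ^ #V * a < b) :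
    ∃ t ∈ V, t < b ∧ ∀ v ∈ V, t < v → K * t < v := by
  by_contra! H
  exact hab.not_ge <| le_pow_mul_of_forall_exists_lt_le_mul hK hb H _ a ha ha0
    (card_le_card (filter_subset _ _))

noncomputable def resistanceValues [Fintype A] [DecidableEq A] (E : (A → ℝ) → ℝ) : Finset ℝ :=
  univ.offDiag.image fun q => rRes E q.1 q.2

section resistanceValues

variable [Fintype A] [DecidableEq A]

lemma mem_resistanceValues {d : ℝ} :
    d ∈ resistanceValues E ↔ ∃ x y : A, x ≠ y ∧ d = rRes E x y := by
  simp [resistanceValues, eq_comm]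

lemma coe_resistanceValues :
    (resistanceValues E : Set ℝ) = {d : ℝ | ∃ x y : A, x ≠ y ∧ d = rRes E x y} := by
  ext d
  exact mem_resistanceValues

lemma resistanceValues_nonempty [Nontrivial A] : (resistanceValues E).Nonempty := by
  obtain ⟨x, y, hxy⟩ := exists_pair_ne A
  exact ⟨_, mem_resistanceValues.mpr ⟨x, y, hxy, rfl⟩⟩

lemma deltaE_eq_min'_div_max' (hV : (resistanceValues E).Nonempty) :
    deltaE E = (resistanceValues E).min' hV / (resistanceValues E).max' hV := by
  rw [deltaE, ← coe_resistanceValues, hV.csInf_eq_min', hV.csSup_eq_max']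

lemma IsPEnergy.pos_of_mem_resistanceValues (hE : IsPEnergy p E) {d : ℝ}
    (hd : d ∈ resistanceValues E) : 0 < d := by
  obtain ⟨x, y, hxy, rfl⟩ := mem_resistanceValues.mp hd
  exact hE.rRes_pos hxy

lemma IsPEnergy.card_resistanceValues_le (hE : IsPEnergy p E) :
    #(resistanceValues E) ≤ (Fintype.card A).choose 2 := by
  -- `rRes E` is symmetric, so it factors through unordered pairs
  let R : Sym2 A → ℝ := Sym2.lift ⟨rRes E, hE.rRes_comm⟩
  have : resistanceValues E = (univ.offDiag.image (Function.uncurry Sym2.mk)).image R := by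
    rw [image_image]
    rfl
  rw [this, ← card_univ, ← Sym2.card_image_offDiag]
  exact card_image_le

end resistanceValues

lemma IsPEnergy.exists_rRes_gap [Fintype A] [Nontrivial A] (hE : IsPEnergy p E) {K δ : ℝ}
    (hK : 1 ≤ K) (hKδ : K ^ (Fintype.card A).choose 2 = δ⁻¹) (hsmall : deltaE E < δ) :
    ∃ x₁ y₁ x₂ y₂ : A, x₁ ≠ y₁ ∧ x₂ ≠ y₂ ∧ rRes E x₁ y₁ < rRes E x₂ y₂ ∧
      ∀ x y : A, x ≠ y → rRes E x₁ y₁ < rRes E x y → K * rRes E x₁ y₁ < rRes E x y := by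
  classical
  set V := resistanceValues E
  have hV : V.Nonempty := resistanceValues_nonempty
  have hδ : 0 < δ := inv_pos.mp (hKδ ▸ by positivity)
  have hspan : K ^ #V * V.min' hV < V.max' hV := calc
    K ^ #V * V.min' hV ≤ K ^ (Fintype.card A).choose 2 * V.min' hV := by
      have := hE.pos_of_mem_resistanceValues (V.min'_mem hV)
      gcongr
      exact hE.card_resistanceValues_le
    _ = V.min' hV / δ := by rw [hKδ, inv_mul_eq_div]
    _ < V.max' hV := by
      rwa [div_lt_iff₀' hδ, ← div_lt_iff₀ (hE.pos_of_mem_resistanceValues (V.max'_mem hV)),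
        ← deltaE_eq_min'_div_max']
  obtain ⟨t, htV, htmax, hgap⟩ := exists_gap_of_pow_card_mul_lt hK (V.min'_mem hV)
    (V.max'_mem hV) (hE.pos_of_mem_resistanceValues (V.min'_mem hV)).le hspan
  obtain ⟨x₁, y₁, h₁, rfl⟩ := mem_resistanceValues.mp htV
  obtain ⟨x₂, y₂, h₂, hmax⟩ := mem_resistanceValues.mp (V.max'_mem hV)
  exact ⟨x₁, y₁, x₂, y₂, h₁, h₂, hmax ▸ htmax,
    fun x y hxy => hgap _ (mem_resistanceValues.mpr ⟨x, y, hxy, rfl⟩)⟩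

def gapRel (E : (A → ℝ) → ℝ) (t : ℝ) (x y : A) : Prop :=
  x = y ∨ rRes E x y ≤ t

lemma IsPEnergy.isNontrivialEquiv_gapRel [Fintype A] (hE : IsPEnergy p E) (hp : 0 < p)
    {t K : ℝ} (hK : 2 ^ p ≤ K)
    (hgap : ∀ x y : A, x ≠ y → t < rRes E x y → K * t < rRes E x y)
    {x₁ y₁ x₂ y₂ : A} (h₁ : x₁ ≠ y₁) (ht₁ : rRes E x₁ y₁ ≤ t) (h₂ : x₂ ≠ y₂)
    (ht₂ : t < rRes E x₂ y₂) : IsNontrivialEquiv (gapRel E t) := by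
  refine ⟨⟨fun x => .inl rfl, ?_, ?_⟩, ⟨x₁, y₁, h₁, .inr ht₁⟩, ⟨x₂, y₂, ?_⟩⟩
  · rintro x y (rfl | h)
    · exact .inl rfl
    · exact .inr (hE.rRes_comm x y ▸ h)
  · rintro x y z (rfl | hxy) (rfl | hyz)
    · exact .inl rfl
    · exact .inr hyz
    · exact .inr hxy
    by_cases hxy' : x = y
    · exact hxy' ▸ .inr hyz
    by_cases hyz' : y = z
    · exact hyz' ▸ .inr hxy
    by_cases hxz : x = z
    · exact .inl hxz
    -- the weak triangle inequality lands below `K t`, hence, by the gap, below `t`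
    refine .inr (not_lt.mp fun hlt => (hgap x z hxz hlt).not_ge ?_)
    have ht : 0 ≤ t := (hE.rRes_pos hxy').le.trans hxy
    exact (hE.rRes_le_two_rpow_mul hp hxy' hyz' hxz hxy hyz).trans (by gcongr)
  · rintro (h | h)
    exacts [h₂ h, h.not_gt ht₂]

lemma deltaJ_gapRel_le {t K : ℝ} (ht : 0 < t) (hK : 0 < K)
    (hgap : ∀ x y : A, x ≠ y → t < rRes E x y → K * t < rRes E x y)
    {x₂ y₂ : A} (h₂ : x₂ ≠ y₂) (ht₂ : t < rRes E x₂ y₂) : deltaJ E (gapRel E t) ≤ K⁻¹ := by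
  have hsup : sSup {d : ℝ | ∃ x y : A, x ≠ y ∧ gapRel E t x y ∧ d = rRes E x y} ≤ t := by
    refine Real.sSup_le ?_ ht.le
    rintro _ ⟨x, y, hxy, hJ | hJ, rfl⟩
    exacts [absurd hJ hxy, hJ]
  have hinf : K * t ≤ sInf {d : ℝ | ∃ x y : A, ¬ gapRel E t x y ∧ d = rRes E x y} := by
    refine le_csInf ⟨_, x₂, y₂, ?_, rfl⟩ ?_
    · rintro (h | h)
      exacts [h₂ h, h.not_gt ht₂]
    · rintro _ ⟨x, y, hJ, rfl⟩
      simp only [gapRel, not_or, not_le] at hJ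
      exact (hgap x y hJ.1 hJ.2).le
  calc deltaJ E (gapRel E t) ≤ t / (K * t) := div_le_div₀ ht.le hsup (by positivity) hinf
    _ = K⁻¹ := by field_simp

lemma rpow_two_div_pow_choose_two {n : ℕ} (hn : 2 ≤ n) {δ : ℝ} (hδ : 0 ≤ δ) :
    (δ ^ (2 / ((n : ℝ) * (n - 1)))) ^ n.choose 2 = δ := by
  have hN : (n : ℝ) * (n - 1) ≠ 0 := by
    have : (2 : ℝ) ≤ n := by exact_mod_cast hn
    nlinarith
  rw [← Real.rpow_natCast, ← Real.rpow_mul hδ, Nat.cast_choose_two, div_mul_div_cancel₀',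
    div_self hN, Real.rpow_one]
  exact two_ne_zero

lemma rpow_lt_inv_rpow_two_div {n : ℕ} (hn : 2 ≤ n) {p δ : ℝ} (hδ0 : 0 < δ)
    (hδ : δ < (n : ℝ) ^ (-((n : ℝ) * ((n : ℝ) - 1) * p) / 2)) :
    (n : ℝ) ^ p < (δ ^ (2 / ((n : ℝ) * (n - 1))))⁻¹ := by
  have hn' : (2 : ℝ) ≤ n := by exact_mod_cast hn
  have hn1 : (0 : ℝ) < n - 1 := by linarith
  have hN : 0 < (n : ℝ) * (n - 1) := by positivity
  have hexp : -((n : ℝ) * (n - 1) * p) / 2 * (2 / ((n : ℝ) * (n - 1))) = -p := by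
    field_simp
  have := Real.rpow_lt_rpow hδ0.le hδ (div_pos two_pos hN)
  rw [← Real.rpow_mul (by positivity), hexp, Real.rpow_neg (by positivity)] at this
  exact (lt_inv_comm₀ (by positivity) (by positivity)).mp this

end

/-- If `0 < δ < (#A)^{-#A(#A-1)p/2}` and `δ(E) < δ`, then there is a non-trivial
equivalence relation `J` on `A` with `δ_J(E) < δ^{2/(#A(#A-1))} (#A)^p`. -/
theorem exists_nontrivial_rel_of_deltaE_small {A : Type*} [Fintype A]
    (hA : 2 ≤ Fintype.card A) (p : ℝ) (hp : 1 < p)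
    (E : (A → ℝ) → ℝ) (hE : IsPEnergy p E)
    (δ : ℝ) (hδ0 : 0 < δ)
    (hδ : δ < (Fintype.card A : ℝ) ^
      (-((Fintype.card A : ℝ) * ((Fintype.card A : ℝ) - 1) * p) / 2))
    (hsmall : deltaE E < δ) :
    ∃ J : A → A → Prop, IsNontrivialEquiv J ∧
      deltaJ E J <
        δ ^ (2 / ((Fintype.card A : ℝ) * ((Fintype.card A : ℝ) - 1))) *
          (Fintype.card A : ℝ) ^ p := by
  have hp0 : 0 < p := by linarith
  set K := (δ ^ (2 / ((Fintype.card A : ℝ) * ((Fintype.card A : ℝ) - 1))))⁻¹ with hK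
  have hnK : (Fintype.card A : ℝ) ^ p < K := rpow_lt_inv_rpow_two_div hA hδ0 hδ
  have h2K : (2 : ℝ) ^ p ≤ K :=
    (Real.rpow_le_rpow zero_le_two (by exact_mod_cast hA) hp0.le).trans hnK.le
  have hK1 : 1 ≤ K := (Real.one_le_rpow one_le_two hp0.le).trans h2K
  have : Nontrivial A := Fintype.one_lt_card_iff_nontrivial.mp hA
  obtain ⟨x₁, y₁, x₂, y₂, h₁, h₂, hlt, hgap⟩ := hE.exists_rRes_gap hK1 (by
    rw [hK, inv_pow, rpow_two_div_pow_choose_two hA hδ0.le]) hsmall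
  refine ⟨gapRel E _, hE.isNontrivialEquiv_gapRel hp0 h2K hgap h₁ le_rfl h₂ hlt, ?_⟩
  calc deltaJ E _ ≤ K⁻¹ := deltaJ_gapRel_le (hE.rRes_pos h₁) (by positivity) hgap h₂ hlt
    _ < K⁻¹ * (Fintype.card A : ℝ) ^ p :=
      lt_mul_of_one_lt_right (by positivity) (Real.one_lt_rpow (by exact_mod_cast hA) hp0)
    _ = _ := by rw [hK, inv_inv]
end
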